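/- Let Q = S₄ be the symmetric group on 4 letters, let P be the subgroup of order 2 generated by the transposition (1 2), let (id_P : P → P) be the identity crossed module on P, and let ι : P → Q be the inclusion. Then for any induced crossed module (∂ : I → Q, j) of (id_P : P → P) along ι, the group I is isomorphic to GL(2, ℤ/3ℤ) (in particular |I| = 48) and ker ∂ has order 2. -/

import Mathlib

universe u

/-- A crossed module `(μ : M → P)`: groups `M`, `P`, a (right) action of `P` on `M` by
group automorphisms, written `act m p` for `m ^ p`, and a homomorphism `μ : M →* P`
satisfying CM1: `μ (m ^ p) = p⁻¹ * μ m * p` and CM2: `n ^ (μ m) = m⁻¹ * n * m`. -/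
structure CrossedModule (M P : Type u) [Group M] [Group P] where
  μ : M →* P
  act : M → P → M
  act_mul : ∀ m n p, act (m * n) p = act m p * act n p
  act_one : ∀ m, act m 1 = m
  act_act : ∀ m p q, act (act m p) q = act m (p * q)
  cm1 : ∀ m p, μ (act m p) = p⁻¹ * μ m * p
  cm2 : ∀ m n, act n (μ m) = m⁻¹ * n * m

/-- A morphism of crossed modules `(f, g) : (μ : M → P) → (ν : N → Q)`:
group homomorphisms `f : M → N`, `g : P → Q` with `ν ∘ f = g ∘ μ` and
`f (m ^ p) = (f m) ^ (g p)`. -/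
def CrossedModule.IsMorphism {M P N Q : Type u} [Group M] [Group P] [Group N] [Group Q]
    (X : CrossedModule M P) (Y : CrossedModule N Q) (f : M →* N) (g : P →* Q) : Prop :=
  (∀ m, Y.μ (f m) = g (X.μ m)) ∧ ∀ m p, f (X.act m p) = Y.act (f m) (g p)

/-- `(∂ : I → Q)` together with `j : M → I` is an induced crossed module of `(μ : M → P)`
along `ι : P → Q`: `(j, ι)` is a morphism of crossed modules, and for every crossed module
`(ν : N → Q)` and morphism `(f, ι) : (μ : M → P) → (ν : N → Q)` there is a unique group
homomorphism `φ : I → N` with `ν ∘ φ = ∂`, `φ (x ^ q) = (φ x) ^ q`, and `φ ∘ j = f`. -/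
def IsInducedCrossedModule {M P Q I : Type u} [Group M] [Group P] [Group Q] [Group I]
    (X : CrossedModule M P) (ι : P →* Q) (Y : CrossedModule I Q) (j : M →* I) : Prop :=
  CrossedModule.IsMorphism X Y j ι ∧
  ∀ (N : Type u) [Group N] (Z : CrossedModule N Q) (f : M →* N),
    CrossedModule.IsMorphism X Z f ι →
    ∃! φ : I →* N, (∀ x, Z.μ (φ x) = Y.μ x) ∧
      (∀ x q, φ (Y.act x q) = Z.act (φ x) q) ∧ ∀ m, φ (j m) = f m

/-- The identity crossed module `(id_P : P → P)` with `P` acting on itself by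
conjugation, `m ^ p = p⁻¹ * m * p`. -/
def conjCM (P : Type u) [Group P] : CrossedModule P P where
  μ := MonoidHom.id P
  act m p := p⁻¹ * m * p
  act_mul m n p := by group
  act_one m := by group
  act_act m p q := by group
  cm1 m p := rfl
  cm2 m n := rfl

set_option maxRecDepth 100000

namespace InducedC2S4

abbrev S4 := Equiv.Perm (Fin 4)
abbrev M2 := Matrix (Fin 2) (Fin 2) (ZMod 3)

def t : S4 := Equiv.swap 0 1

def rep : Fin 12 → S4
| 0 => 1
| 1 => Equiv.swap 2 3
| 2 => Equiv.swap 1 2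
| 3 => Equiv.swap 1 2 * Equiv.swap 2 3
| 4 => Equiv.swap 1 3 * Equiv.swap 2 3
| 5 => Equiv.swap 1 3
| 6 => Equiv.swap 0 2 * Equiv.swap 1 2
| 7 => Equiv.swap 0 2 * Equiv.swap 1 2 * Equiv.swap 2 3
| 8 => Equiv.swap 0 2 * Equiv.swap 1 3
| 9 => Equiv.swap 0 3 * Equiv.swap 1 3 * Equiv.swap 2 3
| 10 => Equiv.swap 0 3 * Equiv.swap 1 3
| 11 => Equiv.swap 0 3 * Equiv.swap 1 2 * Equiv.swap 2 3

def rackL : List (List (Fin 12)) := [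
  [0, 0, 6, 10, 6, 10, 2, 5, 1, 2, 5, 1],
  [1, 1, 9, 7, 9, 7, 4, 3, 0, 4, 3, 0],
  [6, 6, 2, 11, 2, 11, 0, 4, 3, 0, 4, 3],
  [7, 7, 11, 3, 11, 3, 5, 1, 2, 5, 1, 2],
  [9, 9, 4, 8, 4, 8, 1, 2, 5, 1, 2, 5],
  [10, 10, 8, 5, 8, 5, 3, 0, 4, 3, 0, 4],
  [2, 2, 0, 9, 0, 9, 6, 8, 7, 6, 8, 7],
  [3, 3, 10, 1, 10, 1, 8, 7, 6, 8, 7, 6],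
  [11, 11, 5, 4, 5, 4, 7, 6, 8, 7, 6, 8],
  [4, 4, 1, 6, 1, 6, 9, 11, 10, 9, 11, 10],
  [5, 5, 7, 0, 7, 0, 11, 10, 9, 11, 10, 9],
  [8, 8, 3, 2, 3, 2, 10, 9, 11, 10, 9, 11]
]

def gmat : Fin 12 → M2
| 0 => !![0, 1; 1, 0]
| 1 => !![0, 2; 2, 0]
| 2 => !![2, 0; 2, 1]
| 3 => !![2, 0; 1, 1]
| 4 => !![1, 0; 1, 2]
| 5 => !![1, 0; 2, 2]
| 6 => !![1, 2; 0, 2]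
| 7 => !![1, 1; 0, 2]
| 8 => !![1, 0; 0, 2]
| 9 => !![2, 1; 0, 1]
| 10 => !![2, 2; 0, 1]
| 11 => !![2, 0; 0, 1]

def elems48 : List M2 := [
  !![1, 0; 0, 1],
  !![0, 1; 1, 0],
  !![0, 2; 2, 0],
  !![2, 0; 2, 1],
  !![2, 0; 1, 1],
  !![1, 0; 1, 2],
  !![1, 0; 2, 2],
  !![1, 2; 0, 2],
  !![1, 1; 0, 2],
  !![1, 0; 0, 2],
  !![2, 1; 0, 1],
  !![2, 2; 0, 1],
  !![2, 0; 0, 1],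
  !![2, 0; 0, 2],
  !![0, 2; 1, 2],
  !![0, 2; 1, 1],
  !![0, 1; 2, 1],
  !![0, 1; 2, 2],
  !![2, 1; 2, 0],
  !![1, 1; 2, 0],
  !![0, 1; 2, 0],
  !![1, 2; 1, 0],
  !![2, 2; 1, 0],
  !![0, 2; 1, 0],
  !![1, 0; 1, 1],
  !![2, 0; 2, 2],
  !![1, 1; 1, 2],
  !![2, 0; 1, 2],
  !![2, 2; 2, 1],
  !![1, 0; 2, 1],
  !![1, 2; 2, 2],
  !![2, 1; 1, 1],
  !![1, 1; 0, 1],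
  !![1, 2; 0, 1],
  !![2, 2; 0, 2],
  !![2, 1; 0, 2],
  !![0, 1; 1, 1],
  !![0, 2; 2, 2],
  !![1, 1; 2, 1],
  !![0, 2; 2, 1],
  !![2, 2; 1, 2],
  !![0, 1; 1, 2],
  !![2, 1; 2, 2],
  !![1, 2; 1, 1],
  !![1, 1; 1, 0],
  !![2, 1; 1, 0],
  !![2, 2; 2, 0],
  !![1, 2; 2, 0]
]

def words48 : List (List (Fin 12)) := [
  [],
  [0],
  [1],
  [2],
  [3],
  [4],
  [5],
  [6],
  [7],
  [8],
  [9],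
  [10],
  [11],
  [1, 0],
  [2, 0],
  [3, 0],
  [4, 0],
  [5, 0],
  [6, 0],
  [7, 0],
  [8, 0],
  [9, 0],
  [10, 0],
  [11, 0],
  [3, 2],
  [5, 2],
  [7, 2],
  [8, 2],
  [10, 2],
  [11, 2],
  [6, 3],
  [9, 3],
  [7, 6],
  [8, 6],
  [10, 6],
  [11, 6],
  [3, 2, 0],
  [5, 2, 0],
  [7, 2, 0],
  [8, 2, 0],
  [10, 2, 0],
  [11, 2, 0],
  [6, 3, 0],
  [9, 3, 0],
  [7, 6, 0],
  [8, 6, 0],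
  [10, 6, 0],
  [11, 6, 0]
]

def certT0 : List (List (Nat × Nat × Nat)) := [
  [],
  [(0,0,0)],
  [(0,2,0)],
  [(0,3,0)],
  [(0,3,0)],
  [(0,3,0)],
  [(0,3,0)],
  [(0,3,0)],
  [(0,3,0)],
  [(0,3,0)],
  [(0,3,0)],
  [(0,3,0)],
  [(0,3,0)],
  [(0,2,0), (1,0,0)],
  [(0,3,0), (1,0,0)],
  [(0,3,0), (1,0,0)],
  [(0,3,0), (1,0,0)],
  [(0,3,0), (1,0,0)],
  [(0,3,0), (1,0,0)],
  [(0,3,0), (1,0,0)],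
  [(0,3,0), (1,0,0)],
  [(0,3,0), (1,0,0)],
  [(0,3,0), (1,0,0)],
  [(0,3,0), (1,0,0)],
  [(0,3,0), (1,3,0)],
  [(0,3,0), (1,3,0)],
  [(0,3,0), (1,3,0), (0,3,0)],
  [(0,3,0), (1,3,0)],
  [(0,3,0), (1,3,0), (0,2,0)],
  [(0,3,0), (1,3,0)],
  [(0,3,0), (1,3,0), (0,3,0)],
  [(0,3,0), (1,3,0), (0,2,0)],
  [(0,3,0), (1,3,0)],
  [(0,3,0), (1,3,0)],
  [(0,3,0), (1,3,0)],
  [(0,3,0), (1,3,0)],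
  [(0,3,0), (1,3,0), (2,0,0)],
  [(0,3,0), (1,3,0), (2,0,0)],
  [(0,3,0), (1,3,0), (0,3,0), (2,0,0)],
  [(0,3,0), (1,3,0), (2,0,0)],
  [(0,3,0), (1,3,0), (0,2,0), (2,0,0)],
  [(0,3,0), (1,3,0), (2,0,0)],
  [(0,3,0), (1,3,0), (0,3,0), (2,0,0)],
  [(0,3,0), (1,3,0), (0,2,0), (2,0,0)],
  [(0,3,0), (1,3,0), (2,0,0)],
  [(0,3,0), (1,3,0), (2,0,0)],
  [(0,3,0), (1,3,0), (2,0,0)],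
  [(0,3,0), (1,3,0), (2,0,0)]
]

def certT1 : List (List (Nat × Nat × Nat)) := [
  [],
  [],
  [(0,0,0)],
  [(0,2,0), (0,2,0)],
  [(0,1,10), (1,3,0), (1,3,0), (2,0,0)],
  [(0,1,6), (1,3,0), (1,3,0), (2,0,0)],
  [(0,2,0), (0,2,0)],
  [(0,2,0), (0,2,0)],
  [(0,1,5), (1,3,0), (1,3,0), (2,0,0)],
  [(0,2,0)],
  [(0,1,2), (1,3,0), (1,3,0), (2,0,0)],
  [(0,2,0), (0,2,0)],
  [(0,2,0)],
  [(0,0,0)],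
  [(0,2,0), (0,2,0), (1,0,0)],
  [(1,3,0), (0,2,0), (1,0,0)],
  [(1,3,0), (0,2,0), (1,0,0)],
  [(0,2,0), (0,2,0), (1,0,0)],
  [(0,2,0), (0,2,0), (1,0,0)],
  [(1,3,0), (0,2,0), (1,0,0)],
  [(0,2,0), (1,0,0)],
  [(1,3,0), (0,2,0), (1,0,0)],
  [(0,2,0), (0,2,0), (1,0,0)],
  [(0,2,0), (1,0,0)],
  [(1,2,0), (0,3,0), (1,2,0), (0,3,0)],
  [(0,2,0), (0,2,0), (1,3,0)],
  [(0,3,0), (1,2,0), (1,2,0), (0,3,0)],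
  [(0,2,0), (1,3,0)],
  [(0,2,0), (0,2,0), (1,3,0), (0,3,0)],
  [(0,2,0), (1,3,0)],
  [(0,2,0), (0,2,0), (1,3,0), (0,2,0)],
  [(0,2,0), (1,2,0), (1,2,0), (0,2,0), (0,2,0), (1,2,0)],
  [(1,2,0), (0,3,0), (1,2,0), (0,3,0)],
  [(0,2,0), (1,3,0)],
  [(0,2,0), (0,2,0), (1,3,0)],
  [(0,2,0), (1,3,0)],
  [(2,2,0), (1,3,0), (0,2,0), (1,0,0)],
  [(0,2,0), (0,2,0), (1,3,0), (2,0,0)],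
  [(0,3,0), (1,2,0), (1,2,0), (0,3,0), (2,0,0)],
  [(0,2,0), (1,3,0), (2,0,0)],
  [(0,2,0), (0,2,0), (1,3,0), (0,3,0), (2,0,0)],
  [(0,2,0), (1,3,0), (2,0,0)],
  [(0,2,0), (0,2,0), (1,3,0), (0,2,0), (2,0,0)],
  [(0,3,0), (2,3,0), (1,2,0), (0,2,0), (2,0,0)],
  [(2,2,0), (1,3,0), (0,2,0), (1,0,0)],
  [(0,2,0), (1,3,0), (2,0,0)],
  [(0,2,0), (0,2,0), (1,3,0), (2,0,0)],
  [(0,2,0), (1,3,0), (2,0,0)]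
]

def certT2 : List (List (Nat × Nat × Nat)) := [
  [],
  [],
  [(0,2,0), (0,2,0), (0,2,0)],
  [(0,0,0)],
  [(0,3,0)],
  [(0,1,1), (1,2,0), (1,2,0), (1,2,0), (2,0,0)],
  [(0,3,0)],
  [(0,2,0)],
  [(0,3,0)],
  [(0,3,0)],
  [(0,2,0)],
  [(0,3,0)],
  [(0,3,0)],
  [(0,2,0), (0,2,0), (0,2,0), (1,0,0)],
  [(0,0,0)],
  [(0,3,0)],
  [(1,2,0), (1,2,0), (0,3,0), (1,0,0)],
  [(0,3,0)],
  [(0,2,0), (1,0,0)],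
  [(0,3,0)],
  [(0,3,0)],
  [(0,2,0), (1,0,0)],
  [(0,3,0)],
  [(0,3,0)],
  [(0,3,0), (1,0,0)],
  [(0,3,0), (1,0,0)],
  [(0,3,0), (1,0,0)],
  [(0,3,0), (1,0,0)],
  [(0,3,0), (1,0,0)],
  [(0,3,0), (1,0,0)],
  [(0,2,0), (1,3,0), (0,3,0)],
  [(1,2,0), (0,3,0), (1,2,0)],
  [(0,3,0), (1,2,0)],
  [(0,3,0), (1,2,0), (0,2,0)],
  [(0,3,0), (1,2,0)],
  [(0,3,0), (1,2,0), (0,3,0)],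
  [(0,3,0), (1,0,0)],
  [(0,3,0), (1,0,0)],
  [(0,3,0), (1,0,0)],
  [(0,3,0), (1,0,0)],
  [(0,3,0), (1,0,0)],
  [(0,3,0), (1,0,0)],
  [(0,2,0), (1,3,0), (0,3,0), (2,0,0)],
  [(1,2,0), (0,3,0), (1,2,0), (2,0,0)],
  [(0,3,0), (1,2,0), (2,0,0)],
  [(0,3,0), (1,2,0), (0,2,0), (2,0,0)],
  [(0,3,0), (1,2,0), (2,0,0)],
  [(0,3,0), (1,2,0), (0,3,0), (2,0,0)]
]

def certT3 : List (List (Nat × Nat × Nat)) := [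
  [],
  [],
  [(0,2,0), (0,1,5), (1,3,0), (1,3,0), (2,0,0)],
  [],
  [(0,0,0)],
  [(0,2,0), (0,2,0), (0,2,0)],
  [(0,1,1), (1,2,0), (2,3,0), (1,2,0), (2,0,0)],
  [(0,3,0)],
  [(0,1,10), (1,2,0), (1,2,0), (2,0,0)],
  [(0,2,0)],
  [(0,3,0)],
  [(0,3,0), (0,3,0)],
  [(0,2,0)],
  [(0,2,0), (1,3,0), (0,2,0), (1,0,0)],
  [],
  [(0,0,0)],
  [(0,2,0), (0,2,0), (0,2,0)],
  [(1,2,0), (0,3,0), (0,3,0), (1,0,0)],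
  [(0,3,0)],
  [(1,2,0), (0,3,0), (1,0,0)],
  [(0,2,0)],
  [(0,3,0)],
  [(0,3,0), (0,3,0), (1,0,0)],
  [(0,2,0)],
  [(0,0,0)],
  [(1,2,0), (1,2,0), (0,3,0), (1,0,0)],
  [(0,3,0), (1,2,0), (0,3,0), (1,2,0), (0,3,0)],
  [(0,2,0), (1,0,0)],
  [(0,3,0), (0,3,0), (1,3,0)],
  [(0,2,0), (1,0,0)],
  [(0,3,0), (1,0,0)],
  [(0,3,0), (1,0,0)],
  [(0,2,0), (1,2,0), (1,2,0), (0,2,0), (0,2,0)],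
  [(0,2,0), (1,2,0)],
  [(0,3,0), (0,3,0), (1,3,0)],
  [(0,2,0), (1,2,0)],
  [(0,0,0)],
  [(1,2,0), (1,2,0), (0,3,0), (1,0,0)],
  [(2,2,0), (1,2,0), (0,3,0), (1,0,0)],
  [(0,2,0), (1,0,0)],
  [(0,3,0), (0,3,0), (1,3,0), (2,0,0)],
  [(0,2,0), (1,0,0)],
  [(0,3,0), (1,0,0)],
  [(0,3,0), (1,0,0)],
  [(2,2,0), (1,2,0), (0,3,0), (1,0,0)],
  [(0,2,0), (1,2,0), (2,0,0)],
  [(0,3,0), (0,3,0), (1,3,0), (2,0,0)],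
  [(0,2,0), (1,2,0), (2,0,0)]
]

def certT4 : List (List (Nat × Nat × Nat)) := [
  [],
  [],
  [(0,2,0), (0,1,2), (1,3,0), (1,3,0), (2,0,0)],
  [(0,1,1), (1,2,0), (2,3,0), (1,2,0), (2,0,0)],
  [(0,2,0), (0,2,0)],
  [(0,0,0)],
  [(0,1,11), (1,3,0), (1,3,0), (2,0,0)],
  [(0,3,0), (0,3,0)],
  [(0,2,0)],
  [(0,1,3), (1,3,0), (1,3,0), (2,0,0)],
  [(0,1,6), (1,2,0), (1,2,0), (2,0,0)],
  [(0,2,0)],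
  [(0,2,0), (0,2,0)],
  [(0,2,0), (1,3,0), (0,2,0), (1,0,0)],
  [(1,2,0), (0,3,0), (0,3,0), (1,0,0)],
  [(0,2,0), (0,2,0)],
  [(0,0,0)],
  [(1,2,0), (0,3,0), (1,2,0), (0,3,0), (1,2,0)],
  [(0,3,0), (0,3,0), (1,0,0)],
  [(0,2,0)],
  [(0,2,0), (1,3,0), (0,2,0), (1,3,0), (0,2,0), (1,3,0)],
  [(1,2,0), (0,3,0), (1,0,0)],
  [(0,2,0)],
  [(0,2,0), (0,2,0)],
  [(0,2,0), (0,2,0), (1,0,0)],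
  [(1,3,0), (0,2,0), (1,0,0)],
  [(0,2,0), (1,0,0)],
  [(1,3,0), (0,2,0), (1,0,0)],
  [(0,2,0), (1,0,0)],
  [(0,2,0), (0,2,0), (1,0,0)],
  [(0,2,0), (0,2,0), (1,3,0), (0,2,0), (1,3,0)],
  [(1,2,0), (0,2,0), (0,2,0), (1,2,0)],
  [(0,2,0), (1,2,0)],
  [(0,3,0), (1,3,0), (1,3,0), (0,2,0)],
  [(0,2,0), (1,2,0)],
  [(0,2,0), (0,2,0), (1,2,0), (0,2,0)],
  [(0,2,0), (0,2,0), (1,0,0)],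
  [(1,3,0), (0,2,0), (1,0,0)],
  [(0,2,0), (1,0,0)],
  [(1,3,0), (0,2,0), (1,0,0)],
  [(0,2,0), (1,0,0)],
  [(0,2,0), (0,2,0), (1,0,0)],
  [(0,2,0), (2,3,0), (1,2,0), (0,3,0), (2,0,0)],
  [(1,2,0), (0,2,0), (0,2,0), (1,2,0), (2,0,0)],
  [(0,2,0), (1,2,0), (2,0,0)],
  [(0,3,0), (1,3,0), (1,3,0), (0,2,0), (2,0,0)],
  [(0,2,0), (1,2,0), (2,0,0)],
  [(0,2,0), (0,2,0), (1,2,0), (0,2,0), (2,0,0)]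
]

def certT5 : List (List (Nat × Nat × Nat)) := [
  [],
  [],
  [(0,2,0), (0,2,0), (0,2,0)],
  [],
  [(0,1,1), (1,2,0), (1,2,0), (1,2,0), (2,0,0)],
  [(0,2,0), (0,1,3), (1,3,0), (1,3,0), (2,0,0)],
  [(0,0,0)],
  [(0,2,0)],
  [(0,2,0)],
  [(0,1,11), (1,2,0), (1,2,0), (2,0,0)],
  [(0,2,0)],
  [(0,2,0)],
  [(0,3,0), (0,3,0)],
  [(0,2,0), (0,2,0), (0,2,0), (1,0,0)],
  [],
  [(1,2,0), (1,2,0), (0,3,0), (1,0,0)],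
  [(1,2,0), (1,2,0), (0,2,0), (0,2,0), (1,2,0)],
  [(0,0,0)],
  [(0,2,0)],
  [(0,2,0), (1,0,0)],
  [(0,2,0), (1,3,0), (1,3,0), (0,2,0), (0,2,0), (1,3,0)],
  [(0,2,0)],
  [(0,2,0), (1,0,0)],
  [(0,3,0), (0,3,0)],
  [(1,2,0), (0,3,0), (0,3,0), (1,0,0)],
  [(0,0,0)],
  [(0,2,0), (1,3,0)],
  [(1,2,0), (0,3,0), (1,0,0)],
  [(0,2,0), (1,3,0)],
  [(0,3,0), (0,3,0), (1,0,0)],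
  [(0,2,0), (1,0,0)],
  [(0,2,0), (1,0,0)],
  [(0,2,0), (1,3,0)],
  [(1,3,0), (0,2,0), (1,3,0), (0,2,0)],
  [(0,2,0), (1,3,0)],
  [(0,3,0), (0,3,0), (1,2,0)],
  [(1,2,0), (0,3,0), (0,3,0), (1,0,0)],
  [(0,0,0)],
  [(0,2,0), (1,3,0), (2,0,0)],
  [(1,2,0), (0,3,0), (1,0,0)],
  [(0,2,0), (1,3,0), (2,0,0)],
  [(0,3,0), (0,3,0), (1,0,0)],
  [(0,2,0), (1,0,0)],
  [(0,2,0), (1,0,0)],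
  [(0,2,0), (1,3,0), (2,0,0)],
  [(2,3,0), (1,2,0), (0,3,0), (1,0,0)],
  [(0,2,0), (1,3,0), (2,0,0)],
  [(0,3,0), (0,3,0), (1,2,0), (2,0,0)]
]

def certT6 : List (List (Nat × Nat × Nat)) := [
  [],
  [],
  [(0,2,0), (0,2,0), (0,2,0)],
  [(0,2,0)],
  [],
  [(0,2,0)],
  [(0,2,0), (0,2,0)],
  [(0,0,0)],
  [(0,3,0)],
  [(0,3,0)],
  [(0,1,1), (1,2,0), (1,2,0), (1,2,0), (2,0,0)],
  [(0,3,0)],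
  [(0,3,0)],
  [(0,2,0), (0,2,0), (0,2,0), (1,0,0)],
  [(0,2,0), (1,0,0)],
  [],
  [(0,2,0), (1,0,0)],
  [(0,2,0), (0,2,0)],
  [(0,0,0)],
  [(0,3,0)],
  [(0,3,0)],
  [(1,2,0), (1,2,0), (0,3,0), (1,0,0)],
  [(0,3,0)],
  [(0,3,0)],
  [(0,3,0), (1,2,0)],
  [(0,3,0), (1,2,0)],
  [(0,3,0), (1,2,0)],
  [(0,3,0), (1,2,0)],
  [(0,3,0), (1,2,0)],
  [(0,3,0), (1,2,0)],
  [(0,0,0)],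
  [(1,2,0), (0,3,0), (1,0,0)],
  [(0,3,0), (1,0,0)],
  [(0,3,0), (1,0,0)],
  [(0,3,0), (1,0,0)],
  [(0,3,0), (1,0,0)],
  [(0,3,0), (1,2,0), (2,0,0)],
  [(0,3,0), (1,2,0), (2,0,0)],
  [(0,3,0), (1,2,0), (2,0,0)],
  [(0,3,0), (1,2,0), (2,0,0)],
  [(0,3,0), (1,2,0), (2,0,0)],
  [(0,3,0), (1,2,0), (2,0,0)],
  [(0,0,0)],
  [(1,2,0), (0,3,0), (1,0,0)],
  [(0,3,0), (1,0,0)],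
  [(0,3,0), (1,0,0)],
  [(0,3,0), (1,0,0)],
  [(0,3,0), (1,0,0)]
]

def certT7 : List (List (Nat × Nat × Nat)) := [
  [],
  [],
  [(0,2,0), (0,1,10), (1,3,0), (1,3,0), (2,0,0)],
  [],
  [(0,1,5), (1,2,0), (1,2,0), (2,0,0)],
  [(0,2,0), (0,2,0)],
  [(0,3,0), (0,3,0)],
  [],
  [(0,0,0)],
  [(0,2,0)],
  [(0,2,0), (0,2,0), (0,2,0)],
  [(0,1,1), (1,2,0), (2,3,0), (1,2,0), (2,0,0)],
  [(0,2,0)],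
  [(0,2,0), (1,3,0), (0,2,0), (1,0,0)],
  [],
  [(1,2,0), (0,3,0), (1,0,0)],
  [(0,2,0), (0,2,0)],
  [(0,3,0), (0,3,0), (1,0,0)],
  [],
  [(0,0,0)],
  [(0,2,0)],
  [(0,2,0), (0,2,0), (0,2,0)],
  [(1,2,0), (0,3,0), (0,3,0), (1,0,0)],
  [(0,2,0)],
  [(0,2,0), (1,2,0), (1,2,0), (0,3,0)],
  [(0,2,0), (1,2,0), (1,2,0), (0,2,0)],
  [(0,0,0)],
  [(0,2,0), (1,2,0)],
  [(1,2,0), (0,3,0), (1,0,0)],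
  [(0,2,0), (1,2,0)],
  [(1,3,0), (0,3,0), (0,3,0), (1,3,0)],
  [(0,2,0), (0,2,0), (1,2,0), (0,3,0), (0,3,0)],
  [(0,0,0)],
  [(0,2,0), (1,0,0)],
  [(1,2,0), (1,2,0), (0,3,0), (1,0,0)],
  [(0,2,0), (1,0,0)],
  [(0,2,0), (1,2,0), (1,2,0), (0,3,0), (2,0,0)],
  [(0,2,0), (1,2,0), (1,2,0), (0,2,0), (2,0,0)],
  [(0,0,0)],
  [(0,2,0), (1,2,0), (2,0,0)],
  [(1,2,0), (0,3,0), (1,0,0)],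
  [(0,2,0), (1,2,0), (2,0,0)],
  [(1,2,0), (0,2,0), (2,3,0), (1,2,0), (2,0,0)],
  [(0,3,0), (2,2,0), (1,3,0), (0,2,0), (2,0,0)],
  [(0,0,0)],
  [(0,2,0), (1,0,0)],
  [(1,2,0), (1,2,0), (0,3,0), (1,0,0)],
  [(0,2,0), (1,0,0)]
]

def certT8 : List (List (Nat × Nat × Nat)) := [
  [],
  [],
  [(0,2,0), (0,2,0)],
  [],
  [(0,3,0), (0,3,0)],
  [(0,2,0), (0,1,11), (1,3,0), (1,3,0), (2,0,0)],
  [(0,1,3), (1,2,0), (1,2,0), (2,0,0)],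
  [],
  [(0,2,0)],
  [(0,0,0)],
  [(0,2,0), (0,2,0), (0,2,0)],
  [(0,2,0)],
  [(0,1,1), (1,2,0), (1,2,0), (2,0,0)],
  [(0,2,0), (0,2,0), (1,0,0)],
  [],
  [(0,3,0), (0,3,0)],
  [(1,3,0), (1,3,0), (0,2,0), (0,2,0), (1,3,0)],
  [(1,3,0), (0,2,0), (1,3,0), (0,2,0), (1,3,0)],
  [],
  [(0,2,0)],
  [(0,0,0)],
  [(0,2,0), (0,2,0), (0,2,0)],
  [(0,2,0)],
  [(1,2,0), (0,3,0), (1,0,0)],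
  [(0,3,0), (0,3,0), (1,0,0)],
  [(1,2,0), (0,3,0), (1,0,0)],
  [(0,2,0), (1,2,0)],
  [(0,0,0)],
  [(0,2,0), (1,2,0)],
  [(1,2,0), (0,3,0), (0,3,0), (1,0,0)],
  [(1,2,0), (0,3,0), (0,3,0), (1,2,0), (0,2,0)],
  [(0,3,0), (0,3,0), (1,2,0)],
  [(0,2,0), (1,0,0)],
  [(0,0,0)],
  [(0,2,0), (1,0,0)],
  [(1,2,0), (1,2,0), (0,3,0), (1,0,0)],
  [(0,3,0), (0,3,0), (1,0,0)],
  [(1,2,0), (0,3,0), (1,0,0)],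
  [(0,2,0), (1,2,0), (2,0,0)],
  [(0,0,0)],
  [(0,2,0), (1,2,0), (2,0,0)],
  [(1,2,0), (0,3,0), (0,3,0), (1,0,0)],
  [(2,3,0), (1,2,0), (0,3,0), (1,0,0)],
  [(0,3,0), (0,3,0), (1,2,0), (2,0,0)],
  [(0,2,0), (1,0,0)],
  [(0,0,0)],
  [(0,2,0), (1,0,0)],
  [(1,2,0), (1,2,0), (0,3,0), (1,0,0)]
]

def certT9 : List (List (Nat × Nat × Nat)) := [
  [],
  [],
  [(0,2,0), (0,1,6), (1,3,0), (1,3,0), (2,0,0)],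
  [(0,3,0), (0,3,0)],
  [],
  [(0,1,2), (1,2,0), (1,2,0), (2,0,0)],
  [(0,2,0), (0,2,0)],
  [(0,1,1), (1,2,0), (2,3,0), (1,2,0), (2,0,0)],
  [(0,2,0), (0,2,0)],
  [(0,2,0), (0,2,0)],
  [(0,0,0)],
  [(0,1,8), (1,3,0), (1,3,0), (2,0,0)],
  [(0,1,7), (1,3,0), (1,3,0), (2,0,0)],
  [(0,2,0), (1,3,0), (0,2,0), (1,0,0)],
  [(0,3,0), (0,3,0), (1,0,0)],
  [],
  [(1,2,0), (0,3,0), (1,0,0)],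
  [(0,2,0), (0,2,0)],
  [(1,2,0), (0,3,0), (0,3,0), (1,0,0)],
  [(0,2,0), (0,2,0)],
  [(0,2,0), (0,2,0)],
  [(0,0,0)],
  [(1,2,0), (0,3,0), (1,2,0), (0,3,0), (1,2,0)],
  [(0,2,0), (1,3,0), (0,2,0), (1,3,0), (0,2,0), (1,3,0)],
  [(0,2,0), (1,2,0)],
  [(0,2,0), (1,2,0)],
  [(0,2,0), (0,2,0), (1,2,0)],
  [(0,2,0), (0,2,0), (1,2,0)],
  [(0,2,0), (1,3,0), (0,2,0), (1,3,0), (0,2,0)],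
  [(0,3,0), (1,3,0), (1,3,0), (0,2,0), (0,2,0)],
  [(1,2,0), (0,3,0), (1,0,0)],
  [(0,0,0)],
  [(0,2,0), (0,2,0), (1,0,0)],
  [(0,2,0), (0,2,0), (1,0,0)],
  [(1,3,0), (0,2,0), (1,0,0)],
  [(1,3,0), (0,2,0), (1,0,0)],
  [(0,2,0), (1,2,0), (2,0,0)],
  [(0,2,0), (1,2,0), (2,0,0)],
  [(0,2,0), (0,2,0), (1,2,0), (2,0,0)],
  [(0,2,0), (0,2,0), (1,2,0), (2,0,0)],
  [(2,3,0), (1,3,0), (0,2,0), (1,0,0)],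
  [(2,3,0), (1,3,0), (0,2,0), (1,0,0)],
  [(1,2,0), (0,3,0), (1,0,0)],
  [(0,0,0)],
  [(0,2,0), (0,2,0), (1,0,0)],
  [(0,2,0), (0,2,0), (1,0,0)],
  [(1,3,0), (0,2,0), (1,0,0)],
  [(1,3,0), (0,2,0), (1,0,0)]
]

def certT10 : List (List (Nat × Nat × Nat)) := [
  [],
  [],
  [(0,2,0), (0,2,0), (0,2,0)],
  [],
  [(0,2,0)],
  [(0,2,0), (0,2,0)],
  [(0,2,0)],
  [],
  [(0,1,1), (1,2,0), (1,2,0), (1,2,0), (2,0,0)],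
  [(0,3,0), (0,3,0)],
  [(0,2,0), (0,1,7), (1,3,0), (1,3,0), (2,0,0)],
  [(0,0,0)],
  [(0,1,8), (1,2,0), (1,2,0), (2,0,0)],
  [(0,2,0), (0,2,0), (0,2,0), (1,0,0)],
  [],
  [(0,2,0), (1,0,0)],
  [(0,2,0), (0,2,0)],
  [(0,2,0), (1,0,0)],
  [],
  [(1,2,0), (1,2,0), (0,3,0), (1,0,0)],
  [(0,3,0), (0,3,0)],
  [(1,2,0), (1,2,0), (0,2,0), (0,2,0), (1,2,0)],
  [(0,0,0)],
  [(0,2,0), (1,3,0), (1,3,0), (0,2,0), (0,2,0), (1,3,0)],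
  [(0,2,0), (1,3,0), (0,3,0)],
  [(0,2,0), (1,3,0), (0,2,0)],
  [(1,2,0), (0,3,0), (1,0,0)],
  [(0,3,0), (0,3,0), (1,2,0)],
  [(0,0,0)],
  [(1,3,0), (0,2,0), (1,3,0), (0,2,0)],
  [(1,3,0), (0,2,0), (1,3,0)],
  [(0,3,0), (1,2,0), (0,2,0)],
  [(1,2,0), (0,3,0), (0,3,0), (1,0,0)],
  [(0,3,0), (0,3,0), (1,0,0)],
  [(0,0,0)],
  [(1,2,0), (0,3,0), (1,0,0)],
  [(0,2,0), (1,3,0), (0,3,0), (2,0,0)],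
  [(0,2,0), (1,3,0), (0,2,0), (2,0,0)],
  [(1,2,0), (0,3,0), (1,0,0)],
  [(0,3,0), (0,3,0), (1,2,0), (2,0,0)],
  [(0,0,0)],
  [(2,3,0), (1,2,0), (0,3,0), (1,0,0)],
  [(1,3,0), (0,2,0), (1,3,0), (2,0,0)],
  [(0,3,0), (1,2,0), (0,2,0), (2,0,0)],
  [(1,2,0), (0,3,0), (0,3,0), (1,0,0)],
  [(0,3,0), (0,3,0), (1,0,0)],
  [(0,0,0)],
  [(1,2,0), (0,3,0), (1,0,0)]
]

def certT11 : List (List (Nat × Nat × Nat)) := [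
  [],
  [],
  [(0,2,0), (0,2,0)],
  [],
  [(0,2,0)],
  [(0,2,0), (0,2,0), (0,2,0)],
  [(0,2,0)],
  [],
  [(0,3,0), (0,3,0)],
  [(0,1,1), (1,2,0), (1,2,0), (2,0,0)],
  [(0,2,0), (0,1,8), (1,3,0), (1,3,0), (2,0,0)],
  [(0,1,7), (1,2,0), (1,2,0), (2,0,0)],
  [(0,0,0)],
  [(0,2,0), (0,2,0), (1,0,0)],
  [],
  [(0,2,0)],
  [(0,2,0), (0,2,0), (0,2,0)],
  [(0,2,0)],
  [],
  [(0,3,0), (0,3,0)],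
  [(1,2,0), (0,3,0), (1,0,0)],
  [(1,3,0), (1,3,0), (0,2,0), (0,2,0), (1,3,0)],
  [(1,3,0), (0,2,0), (1,3,0), (0,2,0), (1,3,0)],
  [(0,0,0)],
  [(0,2,0), (1,0,0)],
  [(0,2,0), (1,0,0)],
  [(0,3,0), (0,3,0), (1,2,0)],
  [(1,2,0), (1,2,0), (0,3,0), (1,0,0)],
  [(0,2,0), (1,3,0), (1,3,0), (0,2,0), (0,2,0)],
  [(0,0,0)],
  [(0,2,0), (1,2,0)],
  [(0,2,0), (1,2,0)],
  [(0,3,0), (0,3,0), (1,0,0)],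
  [(1,2,0), (0,3,0), (0,3,0), (1,0,0)],
  [(1,2,0), (0,3,0), (1,0,0)],
  [(0,0,0)],
  [(0,2,0), (1,0,0)],
  [(0,2,0), (1,0,0)],
  [(0,3,0), (0,3,0), (1,2,0), (2,0,0)],
  [(1,2,0), (1,2,0), (0,3,0), (1,0,0)],
  [(2,3,0), (1,2,0), (0,3,0), (1,0,0)],
  [(0,0,0)],
  [(0,2,0), (1,2,0), (2,0,0)],
  [(0,2,0), (1,2,0), (2,0,0)],
  [(0,3,0), (0,3,0), (1,0,0)],
  [(1,2,0), (0,3,0), (0,3,0), (1,0,0)],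
  [(1,2,0), (0,3,0), (1,0,0)],
  [(0,0,0)]
]

def certParts : List (List (List (Nat × Nat × Nat))) := [certT0, certT1, certT2, certT3, certT4, certT5, certT6, certT7, certT8, certT9, certT10, certT11]

def cosetIdx (s : S4) : Fin 12 :=
  ⟨((List.finRange 12).findIdx fun c => decide (s = rep c ∨ s = t * rep c)) % 12,
    Nat.mod_lt _ (by norm_num)⟩

def star (c : Fin 12) (σ : S4) : Fin 12 := cosetIdx (rep c * σ)

def δc (c : Fin 12) : S4 := (rep c)⁻¹ * t * rep c

def rack (q r : Fin 12) : Fin 12 := star q (δc r)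

def rackTbl (q r : Fin 12) : Fin 12 := (rackL.getD q.val []).getD r.val 0

set_option maxHeartbeats 2000000

lemma htt : t * t = 1 := by decide
lemma hL1 : ∀ s : S4, cosetIdx (t * s) = cosetIdx s := by decide
lemma hL2 : ∀ c, cosetIdx (rep c) = c := by decide
lemma hL3 : ∀ s : S4, rep (cosetIdx s) = s ∨ rep (cosetIdx s) = t * s := by decide
lemma rack_eq : ∀ q r, rack q r = rackTbl q r := by decide
lemma rack_invol : ∀ a b, rackTbl (rackTbl b a) a = b := by decide
lemma rep0 : rep 0 = 1 := rfl
lemma tne1 : t ≠ 1 := by decide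
lemma hti : t⁻¹ = t := by decide
lemma cosetIdx_t : cosetIdx t = 0 := by decide

-- G-side matrix facts
lemma hgm_sq : ∀ c, gmat c * gmat c = 1 := by decide
lemma hgm_conj : ∀ q r, gmat r * gmat q * gmat r = gmat (rackTbl q r) := by decide

def mydet (M : M2) : ZMod 3 := M 0 0 * M 1 1 - M 0 1 * M 1 0

lemma mem48 : ∀ M : M2, mydet M ≠ 0 → M ∈ elems48 := by decide

def idx48 (M : M2) : ℕ := elems48.findIdx fun N => decide (N = M)

def sec' (M : M2) : List (Fin 12) := words48.getD (idx48 M) []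

lemma sec'_one : sec' 1 = [] := by decide

-- words and evaluation
abbrev Word := List (Fin 12)

def wEval {Γ : Type} [Monoid Γ] (gen : Fin 12 → Γ) (w : Word) : Γ := (w.map gen).prod

lemma wEval_nil {Γ : Type} [Monoid Γ] (gen : Fin 12 → Γ) : wEval gen [] = 1 := rfl

lemma wEval_cons {Γ : Type} [Monoid Γ] (gen : Fin 12 → Γ) (a : Fin 12) (w : Word) :
    wEval gen (a :: w) = gen a * wEval gen w := by simp [wEval]

lemma wEval_hom {Γ Γ' : Type} [Monoid Γ] [Monoid Γ'] (f : Γ →* Γ') (gen : Fin 12 → Γ)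
    (w : Word) : f (wEval gen w) = wEval (fun c => f (gen c)) w := by
  induction w with
  | nil => simp [wEval_nil]
  | cons a w ih => rw [wEval_cons, wEval_cons, map_mul, ih]

lemma evalG_sec : ∀ M ∈ elems48, wEval gmat (sec' M) = M := by decide

def negm : M2 := !![2, 0; 0, 2]

lemma hnegsq : negm * negm = 1 := by decide

lemma kerchar : ∀ M ∈ elems48, (wEval δc (sec' M) = 1 ↔ (M = (1 : M2) ∨ M = negm)) := by decide

lemma negm48 : negm ∈ elems48 := by decide
lemma negm_ne_one : negm ≠ (1 : M2) := by decide
lemma hker_neg : wEval δc (sec' negm) = 1 := by decide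

-- the rewriting checker
def idx12 (n : ℕ) : Fin 12 := ⟨n % 12, Nat.mod_lt _ (by norm_num)⟩

def appBase (k arg : ℕ) (w : Word) : Option Word :=
  if k = 1 then some (idx12 arg :: idx12 arg :: w)
  else match w with
  | a :: b :: w' =>
    if k = 0 then (if a = b then some w' else none)
    else if k = 2 then some (b :: rackTbl a b :: w')
    else if k = 3 then some (rackTbl b a :: a :: w') else none
  | _ => none

def app : ℕ → ℕ → ℕ → Word → Option Word
  | 0, k, arg, w => appBase k arg w
  | _+1, _, _, [] => none
  | i+1, k, arg, a :: w => (app i k arg w).map (a :: ·)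

def runW : Word → List (ℕ × ℕ × ℕ) → Option Word
  | w, [] => some w
  | w, (i, k, a) :: l =>
    match app i k a w with
    | some w' => runW w' l
    | none => none

section Sound

variable {Γ : Type} [Monoid Γ] (gen : Fin 12 → Γ)
  (hsq : ∀ c, gen c * gen c = 1)
  (hex : ∀ a b, gen a * gen b = gen b * gen (rackTbl a b))

include hsq hex

lemma appBase_sound (k arg : ℕ) (w w' : Word) (h : appBase k arg w = some w') :
    wEval gen w = wEval gen w' := by
  unfold appBase at h
  split at h
  · obtain rfl : idx12 arg :: idx12 arg :: w = w' := by simpa using h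
    rw [wEval_cons, wEval_cons, ← mul_assoc, hsq, one_mul]
  · rename_i hk1
    split at h
    · rename_i a b w2
      split at h
      · split at h
        · rename_i hab
          obtain rfl : w2 = w' := by simpa using h
          rw [hab, wEval_cons, wEval_cons, ← mul_assoc, hsq, one_mul]
        · exact absurd h (by simp)
      · split at h
        · obtain rfl : b :: rackTbl a b :: w2 = w' := by simpa using h
          rw [wEval_cons, wEval_cons, wEval_cons, wEval_cons, ← mul_assoc, ← mul_assoc, hex]
        · split at h
          · obtain rfl : rackTbl b a :: a :: w2 = w' := by simpa using h
            rw [wEval_cons, wEval_cons, wEval_cons, wEval_cons, ← mul_assoc, ← mul_assoc,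
              hex (rackTbl b a) a, rack_invol]
          · exact absurd h (by simp)
    · exact absurd h (by simp)

lemma app_sound : ∀ (i k arg : ℕ) (w w' : Word), app i k arg w = some w' →
    wEval gen w = wEval gen w' := by
  intro i
  induction i with
  | zero => exact fun k arg w w' h => appBase_sound gen hsq hex k arg w w' h
  | succ i ih =>
    intro k arg w w' h
    match w with
    | [] => exact absurd h (by simp [app])
    | a :: w2 =>
      rw [show app (i+1) k arg (a :: w2) = (app i k arg w2).map (a :: ·) from rfl] at h
      rw [Option.map_eq_some_iff] at h
      obtain ⟨v, hv, rfl⟩ := h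
      rw [wEval_cons, wEval_cons, ih k arg w2 v hv]

lemma runW_sound : ∀ (l : List (ℕ × ℕ × ℕ)) (w w' : Word), runW w l = some w' →
    wEval gen w = wEval gen w' := by
  intro l
  induction l with
  | nil =>
    intro w w' h
    have h2 : some w = some w' := h
    injection h2 with h3
    rw [h3]
  | cons s l ih =>
    intro w w' h
    obtain ⟨i, k, a⟩ := s
    rw [show runW w ((i,k,a) :: l) = match app i k a w with
      | some w2 => runW w2 l | none => none from rfl] at h
    split at h
    · rename_i w2 hw2
      rw [app_sound gen hsq hex i k a w w2 hw2, ih w2 w' h]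
    · exact absurd h (by simp)

end Sound

def certFor (c : Fin 12) (M : M2) : List (ℕ × ℕ × ℕ) :=
  (certParts.getD c.val []).getD (idx48 M) []

set_option maxHeartbeats 8000000 in
lemma cert_ok : ∀ (c : Fin 12), ∀ M ∈ elems48,
    runW (c :: sec' M) (certFor c M) = some (sec' (gmat c * M)) := by decide

-- ## The presented group U

def rels : Set (FreeGroup (Fin 12)) :=
  (Set.range fun c => FreeGroup.of c * FreeGroup.of c) ∪
  (Set.range fun p : Fin 12 × Fin 12 =>
    FreeGroup.of p.2 * FreeGroup.of p.1 * FreeGroup.of p.2 * (FreeGroup.of (rack p.1 p.2))⁻¹)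

abbrev U := PresentedGroup rels

def xg (c : Fin 12) : U := PresentedGroup.of c

lemma mk_rels_eq_one {w : FreeGroup (Fin 12)} (h : w ∈ rels) :
    PresentedGroup.mk rels w = 1 :=
  (QuotientGroup.eq_one_iff w).mpr (Subgroup.subset_normalClosure h)

lemma xsq (c : Fin 12) : xg c * xg c = 1 := by
  have h := mk_rels_eq_one (Or.inl ⟨c, rfl⟩)
  simp only [map_mul] at h
  exact h

lemma xconj (q r : Fin 12) : xg r * xg q * xg r = xg (rack q r) := by
  have h := mk_rels_eq_one (Or.inr ⟨(q, r), rfl⟩)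
  simp only [map_mul, map_inv] at h
  exact mul_inv_eq_one.mp h

lemma xinv (c : Fin 12) : (xg c)⁻¹ = xg c := inv_eq_of_mul_eq_one_right (xsq c)

lemma hexU : ∀ a b, xg a * xg b = xg b * xg (rackTbl a b) := by
  intro a b
  rw [← rack_eq, ← xconj a b, ← mul_assoc, ← mul_assoc, xsq, one_mul]

lemma rels_cond {Γ : Type} [Group Γ] (f : Fin 12 → Γ) (h1 : ∀ c, f c * f c = 1)
    (h2 : ∀ q r, f r * f q * f r = f (rack q r)) :
    ∀ r ∈ rels, FreeGroup.lift f r = 1 := by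
  rintro w (⟨c, rfl⟩ | ⟨⟨q, r⟩, rfl⟩)
  · simpa [map_mul] using h1 c
  · simp only [map_mul, map_inv, FreeGroup.lift_apply_of]
    exact mul_inv_eq_one.mpr (h2 q r)

-- ## the boundary map μU : U → S4

lemma δsq (c : Fin 12) : δc c * δc c = 1 := by
  have h : δc c * δc c = (rep c)⁻¹ * (t * t) * rep c := by unfold δc; group
  rw [h, htt]; group

lemma δinv (c : Fin 12) : (δc c)⁻¹ = δc c := inv_eq_of_mul_eq_one_right (δsq c)

lemma δ_star (c : Fin 12) (σ : S4) : δc (star c σ) = σ⁻¹ * δc c * σ := by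
  rcases hL3 (rep c * σ) with h | h
  · show (rep (star c σ))⁻¹ * t * rep (star c σ) = _
    rw [show rep (star c σ) = rep c * σ from h]
    unfold δc; group
  · show (rep (star c σ))⁻¹ * t * rep (star c σ) = _
    rw [show rep (star c σ) = t * (rep c * σ) from h]
    have h2 : (t * (rep c * σ))⁻¹ * t * (t * (rep c * σ))
        = σ⁻¹ * ((rep c)⁻¹ * (t⁻¹ * (t * t)) * rep c) * σ := by group
    rw [h2, htt, mul_one, hti]
    rfl

lemma δconj (q r : Fin 12) : δc r * δc q * δc r = δc (rack q r) := by
  show _ = δc (star q (δc r))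
  rw [δ_star, δinv]

def μU : U →* S4 := PresentedGroup.toGroup (f := δc) (rels_cond δc δsq δconj)

lemma μU_of (c : Fin 12) : μU (xg c) = δc c := PresentedGroup.toGroup.of _

-- ## the S4-action on U

lemma star_one (c : Fin 12) : star c 1 = c := by
  unfold star; rw [mul_one, hL2]

lemma star_mul (c : Fin 12) (σ τ : S4) : star (star c σ) τ = star c (σ * τ) := by
  show cosetIdx (rep (cosetIdx (rep c * σ)) * τ) = cosetIdx (rep c * (σ * τ))
  rcases hL3 (rep c * σ) with h | h
  · rw [h, mul_assoc]
  · rw [h, mul_assoc t, hL1, mul_assoc]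

lemma rack_star (q r : Fin 12) (σ : S4) :
    rack (star q σ) (star r σ) = star (rack q r) σ := by
  unfold rack
  rw [δ_star r σ, star_mul, star_mul]
  congr 1
  group

def AU (σ : S4) : U →* U :=
  PresentedGroup.toGroup (f := fun c => xg (star c σ))
    (rels_cond _ (fun c => xsq _)
      (fun q r => by rw [← rack_star]; exact xconj (star q σ) (star r σ)))

lemma AU_of (σ : S4) (c : Fin 12) : AU σ (xg c) = xg (star c σ) :=
  PresentedGroup.toGroup.of _

lemma AU_one : AU 1 = MonoidHom.id U :=
  PresentedGroup.ext fun c => by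
    rw [show (PresentedGroup.of c : U) = xg c from rfl, AU_of, star_one]
    rfl

lemma AU_one' (u : U) : AU 1 u = u := (DFunLike.congr_fun AU_one u : _)

lemma AU_mul (σ τ : S4) : (AU τ).comp (AU σ) = AU (σ * τ) :=
  PresentedGroup.ext fun c => by
    simp only [MonoidHom.comp_apply]
    rw [show (PresentedGroup.of c : U) = xg c from rfl, AU_of, AU_of, AU_of, star_mul]

lemma AU_mul' (σ τ : S4) (u : U) : AU τ (AU σ u) = AU (σ * τ) u :=
  (DFunLike.congr_fun (AU_mul σ τ) u : _)

def conjHom {Γ : Type u} [Group Γ] (g : Γ) : Γ →* Γ where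
  toFun u := g⁻¹ * u * g
  map_one' := by group
  map_mul' a b := by group

lemma cm1U (σ : S4) : μU.comp (AU σ) = (conjHom σ).comp μU :=
  PresentedGroup.ext fun c => by
    simp only [MonoidHom.comp_apply]
    rw [show (PresentedGroup.of c : U) = xg c from rfl, AU_of, μU_of, μU_of, δ_star]
    rfl

lemma cm2gen (d : Fin 12) : AU (δc d) = conjHom (xg d) :=
  PresentedGroup.ext fun c => by
    rw [show (PresentedGroup.of c : U) = xg c from rfl, AU_of]
    show xg (rack c d) = _
    rw [← xconj c d]
    show xg d * xg c * xg d = (xg d)⁻¹ * xg c * xg d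
    rw [xinv]

def cmS : Subgroup U where
  carrier := {m : U | ∀ u, AU (μU m) u = m⁻¹ * u * m}
  one_mem' := by
    intro u
    show AU (μU 1) u = 1⁻¹ * u * 1
    rw [map_one, AU_one' u]
    show u = 1⁻¹ * u * 1
    group
  mul_mem' := by
    intro a b ha hb u
    show AU (μU (a * b)) u = (a * b)⁻¹ * u * (a * b)
    rw [map_mul, ← AU_mul' (μU a) (μU b) u, ha u, hb (a⁻¹ * u * a)]
    group
  inv_mem' := by
    intro a ha u
    show AU (μU a⁻¹) u = (a⁻¹)⁻¹ * u * a⁻¹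
    have h2 : AU (μU a) (AU (μU a⁻¹) u) = u := by
      rw [AU_mul' (μU a⁻¹) (μU a) u, ← map_mul]
      have h4 : (a⁻¹ * a : U) = 1 := by group
      rw [h4, map_one, AU_one' u]
    have h3 := ha (AU (μU a⁻¹) u)
    rw [h2] at h3
    rw [show AU (μU a⁻¹) u = a * (a⁻¹ * AU (μU a⁻¹) u * a) * a⁻¹ by group, ← h3]
    group

lemma cm2U (m u : U) : AU (μU m) u = m⁻¹ * u * m := by
  have hm : m ∈ cmS := by
    apply PresentedGroup.generated_by rels cmS
    intro d u
    show AU (μU (xg d)) u = (xg d)⁻¹ * u * xg d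
    rw [μU_of, cm2gen d]
    rfl
  exact hm u

def ZU : CrossedModule U S4 where
  μ := μU
  act u σ := AU σ u
  act_mul m n p := map_mul (AU p) m n
  act_one m := AU_one' m
  act_act m p q := AU_mul' p q m
  cm1 m p := DFunLike.congr_fun (cm1U p) m
  cm2 m n := cm2U m n

-- ## the homomorphism σG : U → GL(2,3)

abbrev G2 := Matrix.GeneralLinearGroup (Fin 2) (ZMod 3)

def gm (c : Fin 12) : G2 := ⟨gmat c, gmat c, hgm_sq c, hgm_sq c⟩

lemma gm_sq (c : Fin 12) : gm c * gm c = 1 := Units.ext (hgm_sq c)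

lemma gm_conj (q r : Fin 12) : gm r * gm q * gm r = gm (rack q r) :=
  Units.ext (by rw [rack_eq]; exact hgm_conj q r)

def σG : U →* G2 := PresentedGroup.toGroup (f := gm) (rels_cond gm gm_sq gm_conj)

lemma σG_of (c : Fin 12) : σG (xg c) = gm c := PresentedGroup.toGroup.of _

def evalU (w : Word) : U := wEval xg w

lemma σG_val (w : Word) : ((σG (evalU w) : G2) : M2) = wEval gmat w := by
  unfold evalU
  rw [wEval_hom σG xg w]
  have h1 : wEval (fun c => σG (xg c)) w = wEval gm w := by
    congr 1; funext c; rw [σG_of]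
  rw [h1]
  have h2 : ((wEval gm w : G2) : M2) = wEval (fun c => ((gm c : G2) : M2)) w :=
    wEval_hom (Units.coeHom M2) gm w
  rw [h2]
  rfl

lemma unit_mem48 (g : G2) : ((g : G2) : M2) ∈ elems48 := by
  apply mem48
  have hu : IsUnit ((g : G2) : M2) := ⟨g, rfl⟩
  have hd := (Matrix.isUnit_iff_isUnit_det _).mp hu
  rw [Matrix.det_fin_two] at hd
  rw [isUnit_iff_ne_zero] at hd
  exact hd

lemma surjG (g : G2) : σG (evalU (sec' ((g : G2) : M2))) = g := by
  apply Units.ext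
  rw [σG_val]
  exact evalG_sec _ (unit_mem48 g)

lemma cert_eval (c : Fin 12) (M : M2) (hM : M ∈ elems48) :
    evalU (sec' (gmat c * M)) = xg c * evalU (sec' M) := by
  have h := cert_ok c M hM
  have h2 := runW_sound xg xsq hexU (certFor c M) (c :: sec' M) (sec' (gmat c * M)) h
  unfold evalU
  rw [← h2, wEval_cons]

lemma repr_eq (u : U) : evalU (sec' ((σG u : G2) : M2)) = u := by
  have hone : evalU (sec' ((σG (1 : U) : G2) : M2)) = 1 := by
    rw [map_one, Units.val_one, sec'_one]
    rfl
  have main : ∀ z : FreeGroup (Fin 12), ∀ v : U,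
      evalU (sec' ((σG v : G2) : M2)) = v →
      evalU (sec' ((σG (PresentedGroup.mk rels z * v) : G2) : M2))
        = PresentedGroup.mk rels z * v := by
    intro z
    induction z using FreeGroup.induction_on with
    | C1 => intro v hv; rw [map_one, one_mul]; exact hv
    | of c =>
      intro v hv
      have hxc : PresentedGroup.mk rels (FreeGroup.of c) = xg c := rfl
      rw [hxc]
      have hmul : ((σG (xg c * v) : G2) : M2) = gmat c * ((σG v : G2) : M2) := by
        rw [map_mul, σG_of]
        rfl
      rw [hmul, cert_eval c _ (unit_mem48 (σG v)), hv]
    | inv_of c hc =>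
      intro v hv
      have hxc : PresentedGroup.mk rels (FreeGroup.of c)⁻¹ = xg c := by
        rw [map_inv, show PresentedGroup.mk rels (FreeGroup.of c) = xg c from rfl, xinv]
      rw [hxc]
      have := hc v hv
      rwa [show PresentedGroup.mk rels (FreeGroup.of c) = xg c from rfl] at this
    | mul z1 z2 h1 h2 =>
      intro v hv
      rw [map_mul (PresentedGroup.mk rels) z1 z2, mul_assoc]
      exact h1 _ (h2 v hv)
  obtain ⟨z, rfl⟩ := PresentedGroup.mk_surjective rels u
  have := main z 1 hone
  rwa [mul_one] at this

lemma injG : Function.Injective σG := by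
  intro u1 u2 h
  rw [← repr_eq u1, ← repr_eq u2, h]

noncomputable def eUG : U ≃* G2 :=
  MulEquiv.ofBijective σG ⟨injG, fun g => ⟨evalU (sec' ((g : G2) : M2)), surjG g⟩⟩

lemma δc_zero : δc 0 = t := by
  show (rep 0)⁻¹ * t * rep 0 = t
  rw [rep0]; group

lemma starZero (σ : S4) : star 0 σ = cosetIdx σ := by
  unfold star; rw [rep0, one_mul]

lemma actOne' {M P : Type u} [Group M] [Group P] (Y : CrossedModule M P) (p : P) :
    Y.act 1 p = 1 := by
  have h := Y.act_mul 1 1 p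
  rw [mul_one] at h
  have h2 : Y.act 1 p * 1 = Y.act 1 p * Y.act 1 p := by rw [mul_one, ← h]
  exact (mul_left_cancel h2).symm

def fUgen (P : Subgroup S4) (memP : ∀ m : ↥P, (m : S4) = 1 ∨ (m : S4) = t) : ↥P →* U where
  toFun m := if (m : S4) = 1 then 1 else xg 0
  map_one' := by simp
  map_mul' m n := by
    have hmn : ((m * n : ↥P) : S4) = (m : S4) * (n : S4) := rfl
    rcases memP m with h1 | h1 <;> rcases memP n with h2 | h2 <;>
      simp [hmn, h1, h2, htt, tne1, xsq]

lemma fUgen_t (P : Subgroup S4) (memP) (m : ↥P) (h : (m : S4) = t) :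
    fUgen P memP m = xg 0 := by
  show (if (m : S4) = 1 then (1 : U) else xg 0) = xg 0
  rw [h, if_neg tne1]

lemma fUgen_one (P : Subgroup S4) (memP) (m : ↥P) (h : (m : S4) = 1) :
    fUgen P memP m = 1 := by
  show (if (m : S4) = 1 then (1 : U) else xg 0) = 1
  rw [h, if_pos rfl]

lemma card48 : Nat.card G2 = 48 := by
  rw [Matrix.card_GL_field, ZMod.card]
  decide

def gneg : G2 := ⟨negm, negm, hnegsq, hnegsq⟩

lemma mG_ker_char (mG : G2 →* S4) (hmG : ∀ g : G2, mG g = wEval δc (sec' ((g : G2) : M2))) :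
    Nat.card mG.ker = 2 := by
  have hmem : ∀ g : G2, g ∈ mG.ker ↔ ((g : G2) : M2) = 1 ∨ ((g : G2) : M2) = negm := by
    intro g
    rw [MonoidHom.mem_ker, hmG g]
    exact kerchar _ (unit_mem48 g)
  have h1 : (1 : G2) ∈ mG.ker := by
    rw [hmem]; left; rfl
  have hn : gneg ∈ mG.ker := by
    rw [hmem]; right; rfl
  rw [Nat.card_eq_two_iff]
  refine ⟨⟨1, h1⟩, ⟨gneg, hn⟩, ?_, ?_⟩
  · intro h
    have h2 : ((1 : G2) : M2) = ((gneg : G2) : M2) :=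
      congrArg (fun z : mG.ker => ((z : G2) : M2)) h
    exact negm_ne_one (h2.symm : negm = (1 : M2))
  · apply Set.eq_univ_iff_forall.mpr
    intro z
    rcases (hmem z.1).mp z.2 with h | h
    · left; exact Subtype.ext (Units.ext h)
    · right; exact Subtype.ext (Units.ext h)

end InducedC2S4

open InducedC2S4

/-- Let `Q = S₄`, `P` the subgroup of order 2 generated by the transposition `(1 2)`,
and consider the identity crossed module on `P` and the inclusion `ι : P → Q`.  For any
induced crossed module `(∂ : I → Q, j)` of `(id_P : P → P)` along `ι`, the group `I` is
isomorphic to `GL(2, ℤ/3ℤ)` (in particular `|I| = 48`) and `ker ∂` has order 2. -/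
theorem induced_C2_S4 (P : Subgroup (Equiv.Perm (Fin 4)))
    (hP : P = Subgroup.zpowers (Equiv.swap (0 : Fin 4) 1))
    {I : Type} [Group I] (Y : CrossedModule I (Equiv.Perm (Fin 4))) (j : ↥P →* I)
    (hInd : IsInducedCrossedModule (conjCM ↥P) P.subtype Y j) :
    Nonempty (I ≃* Matrix.GeneralLinearGroup (Fin 2) (ZMod 3)) ∧
    Nat.card I = 48 ∧ Nat.card Y.μ.ker = 2 := by

  classical
  have htP : t ∈ P := by rw [hP]; exact Subgroup.mem_zpowers _
  set tP : ↥P := ⟨t, htP⟩ with htPdef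
  have memP : ∀ m : ↥P, (m : S4) = 1 ∨ (m : S4) = t := by
    intro m
    have hm : (m : S4) ∈ Subgroup.zpowers (Equiv.swap (0 : Fin 4) 1) := by
      rw [← hP]; exact m.2
    rw [Subgroup.mem_zpowers_iff] at hm
    obtain ⟨k, hk⟩ := hm
    have hk' : t ^ k = (m : S4) := hk
    rcases Int.even_or_odd k with ⟨r, hr⟩ | ⟨r, hr⟩
    · left
      rw [← hk', hr, show r + r = 2 * r by ring, zpow_mul]
      have h2 : (t : S4) ^ (2 : ℤ) = 1 := by
        rw [show (2 : ℤ) = 1 + 1 by rfl, zpow_add, zpow_one, htt]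
      rw [h2, one_zpow]
    · right
      rw [← hk', hr, zpow_add, zpow_mul, zpow_one]
      have h2 : (t : S4) ^ (2 : ℤ) = 1 := by
        rw [show (2 : ℤ) = 1 + 1 by rfl, zpow_add, zpow_one, htt]
      rw [h2, one_zpow, one_mul]
  set fU : ↥P →* U := fUgen P memP with hfUdef
  -- the morphism (fU, ι)
  have hmor : CrossedModule.IsMorphism (conjCM ↥P) ZU fU P.subtype := by
    constructor
    · intro m
      rcases memP m with h1 | h1
      · rw [hfUdef, fUgen_one P memP m h1, map_one]
        exact h1.symm
      · rw [hfUdef, fUgen_t P memP m h1]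
        show μU (xg 0) = P.subtype m
        rw [μU_of, δc_zero]
        exact h1.symm
    · intro m p
      have habel : (conjCM ↥P).act m p = m := by
        show p⁻¹ * m * p = m
        apply Subtype.ext
        have h3 : ((p⁻¹ * m * p : ↥P) : S4) = (p : S4)⁻¹ * (m : S4) * (p : S4) := rfl
        rw [h3]
        rcases memP m with h1 | h1 <;> rcases memP p with h2 | h2 <;> rw [h1, h2] <;> group
      rw [habel]
      rcases memP m with h1 | h1
      · rw [hfUdef, fUgen_one P memP m h1]
        exact (map_one (AU (P.subtype p))).symm
      · rw [hfUdef, fUgen_t P memP m h1]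
        show xg 0 = AU (P.subtype p) (xg 0)
        rcases memP p with h2 | h2
        · rw [show P.subtype p = (p : S4) from rfl, h2, AU_one' (xg 0)]
        · rw [show P.subtype p = (p : S4) from rfl, h2, AU_of,
            show star 0 t = 0 from by rw [starZero, cosetIdx_t]]
  obtain ⟨φ, ⟨hφ1, hφ2, hφ3⟩, -⟩ := hInd.2 U ZU fU hmor
  obtain ⟨ψ0, hψ0, hψu⟩ := hInd.2 I Y j hInd.1
  -- data about j
  have jt2 : j tP * j tP = 1 := by
    rw [← map_mul]
    have h : tP * tP = 1 := Subtype.ext htt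
    rw [h, map_one]
  have hjt : Y.μ (j tP) = t := by
    have h := hInd.1.1 tP
    rw [h]; rfl
  have hfix : Y.act (j tP) t = j tP := by
    have h := hInd.1.2 tP tP
    rw [show (conjCM ↥P).act tP tP = tP from by show tP⁻¹ * tP * tP = tP; group] at h
    exact h.symm
  set y : Fin 12 → I := fun c => Y.act (j tP) (rep c) with hydef
  have ysq : ∀ c, y c * y c = 1 := by
    intro c
    rw [hydef]
    show Y.act (j tP) (rep c) * Y.act (j tP) (rep c) = 1
    rw [← Y.act_mul, jt2, actOne']
  have μy : ∀ c, Y.μ (y c) = δc c := by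
    intro c
    rw [hydef]
    show Y.μ (Y.act (j tP) (rep c)) = δc c
    rw [Y.cm1, hjt]
    rfl
  have yfixT : ∀ s : S4, Y.act (j tP) (t * s) = Y.act (j tP) s := by
    intro s
    rw [← Y.act_act, hfix]
  have yconj : ∀ q r, y r * y q * y r = y (rack q r) := by
    intro q r
    have h1 : (y r)⁻¹ = y r := inv_eq_of_mul_eq_one_right (ysq r)
    have h2 := Y.cm2 (y r) (y q)
    rw [μy r] at h2
    calc y r * y q * y r = (y r)⁻¹ * y q * y r := by rw [h1]
    _ = Y.act (y q) (δc r) := h2.symm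
    _ = Y.act (j tP) (rep q * δc r) := by
        rw [show y q = Y.act (j tP) (rep q) from rfl, Y.act_act]
    _ = y (rack q r) := by
        show _ = Y.act (j tP) (rep (rack q r))
        rcases hL3 (rep q * δc r) with h | h
        · rw [show rep (rack q r) = rep q * δc r from h]
        · rw [show rep (rack q r) = t * (rep q * δc r) from h, yfixT]
  set θ : U →* I := PresentedGroup.toGroup (f := y) (rels_cond y ysq yconj) with hθdef
  have θ_of : ∀ c, θ (xg c) = y c := fun c => PresentedGroup.toGroup.of _
  have μθ : ∀ u, Y.μ (θ u) = μU u := by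
    have hh : Y.μ.comp θ = μU := PresentedGroup.ext fun c => by
      rw [MonoidHom.comp_apply, show (PresentedGroup.of c : U) = xg c from rfl, θ_of, μy, μU_of]
    exact fun u => DFunLike.congr_fun hh u
  have θact : ∀ u σ, θ (AU σ u) = Y.act (θ u) σ := by
    intro u σ
    let Yact : I →* I := {
      toFun := fun i => Y.act i σ
      map_one' := actOne' Y σ
      map_mul' := fun a b => Y.act_mul a b σ }
    have hhh : θ.comp (AU σ) = Yact.comp θ := PresentedGroup.ext fun c => by
      simp only [MonoidHom.comp_apply]
      rw [show (PresentedGroup.of c : U) = xg c from rfl, AU_of, θ_of, θ_of]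
      show y (star c σ) = Y.act (y c) σ
      rw [hydef]
      show Y.act (j tP) (rep (star c σ)) = Y.act (Y.act (j tP) (rep c)) σ
      rw [Y.act_act]
      rcases hL3 (rep c * σ) with h | h
      · rw [show rep (star c σ) = rep c * σ from h]
      · rw [show rep (star c σ) = t * (rep c * σ) from h, yfixT]
    exact DFunLike.congr_fun hhh u
  have θfU : ∀ m : ↥P, θ (fU m) = j m := by
    intro m
    rcases memP m with h1 | h1
    · have hm1 : m = 1 := Subtype.ext h1
      rw [hm1, hfUdef, map_one, map_one, map_one]
    · have hmt : m = tP := Subtype.ext h1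
      rw [hmt, hfUdef, fUgen_t P memP tP rfl, θ_of]
      show Y.act (j tP) (rep 0) = j tP
      rw [rep0, Y.act_one]
  -- uniqueness
  have e1 := hψu (θ.comp φ) ⟨
    fun x => by
      show Y.μ (θ (φ x)) = Y.μ x
      rw [μθ (φ x)]
      exact hφ1 x,
    fun x q => by
      show θ (φ (Y.act x q)) = Y.act (θ (φ x)) q
      rw [hφ2 x q]
      exact θact (φ x) q,
    fun m => by
      show θ (φ (j m)) = j m
      rw [hφ3 m]
      exact θfU m⟩
  have e2 := hψu (MonoidHom.id I) ⟨fun x => rfl, fun x q => rfl, fun m => rfl⟩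
  have hθφ : θ.comp φ = MonoidHom.id I := e1.trans e2.symm
  have hφθ : φ.comp θ = MonoidHom.id U := by
    apply PresentedGroup.ext
    intro c
    show φ (θ (PresentedGroup.of c)) = PresentedGroup.of c
    rw [show (PresentedGroup.of c : U) = xg c from rfl, θ_of]
    rw [show y c = Y.act (j tP) (rep c) from rfl]
    rw [hφ2 (j tP) (rep c), hφ3 tP]
    rw [hfUdef, fUgen_t P memP tP rfl]
    show AU (rep c) (xg 0) = xg c
    rw [AU_of, starZero, hL2]
  have eIU : I ≃* U := {
    toFun := φ
    invFun := θ
    left_inv := fun i => DFunLike.congr_fun hθφ i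
    right_inv := fun u => DFunLike.congr_fun hφθ u
    map_mul' := map_mul φ }
  have eIG : I ≃* G2 := eIU.trans eUG
  refine ⟨⟨eIG⟩, ?_, ?_⟩
  · rw [Nat.card_congr eIG.toEquiv]
    exact card48
  · -- kernel
    have hsymm : ∀ g : G2, eUG.symm g = evalU (sec' ((g : G2) : M2)) := by
      intro g
      apply eUG.injective
      rw [MulEquiv.apply_symm_apply]
      exact (surjG g).symm
    set mG : G2 →* S4 := μU.comp (eUG.symm.toMonoidHom) with hmGdef
    have hmG : ∀ g : G2, mG g = wEval δc (sec' ((g : G2) : M2)) := by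
      intro g
      show μU (eUG.symm g) = _
      rw [hsymm g]
      show μU (wEval xg (sec' _)) = _
      rw [wEval_hom μU xg]
      have hfun : (fun c => μU (xg c)) = δc := funext fun c => μU_of c
      rw [hfun]
    have eker : (Y.μ.ker ≃ mG.ker) := {
      toFun := fun i => ⟨eUG (φ i.1), by
        rw [MonoidHom.mem_ker]
        show μU (eUG.symm (eUG (φ i.1))) = 1
        rw [MulEquiv.symm_apply_apply, show μU (φ i.1) = Y.μ i.1 from hφ1 i.1]
        exact MonoidHom.mem_ker.mp i.2⟩
      invFun := fun g => ⟨θ (eUG.symm g.1), by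
        rw [MonoidHom.mem_ker, μθ]
        exact MonoidHom.mem_ker.mp g.2⟩
      left_inv := fun i => Subtype.ext (by
        show θ (eUG.symm (eUG (φ i.1))) = i.1
        rw [MulEquiv.symm_apply_apply]
        exact DFunLike.congr_fun hθφ i.1)
      right_inv := fun g => Subtype.ext (by
        show eUG (φ (θ (eUG.symm g.1))) = g.1
        have h5 : φ (θ (eUG.symm g.1)) = eUG.symm g.1 :=
          DFunLike.congr_fun hφθ (eUG.symm g.1)
        rw [h5]
        exact MulEquiv.apply_symm_apply eUG g.1) }
    rw [Nat.card_congr eker]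
    exact mG_ker_char mG hmG
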